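/- Let Q be a finite connected quiver with a loop c at some vertex i, let n ≥ 1 and β = (n, …, n). Suppose W ∈ F•Rep(Q,β) satisfies: (1) the diagonal entries of W(c) are pairwise distinct, and (2) for every arrow a ∈ Q₁ all diagonal entries of W(a) are nonzero (so every W(a) is invertible). Then the stabilizer of W in 𝕌 is trivial: if (u_v)_{v∈Q₀} ∈ 𝕌 satisfies u_{h(a)} · W(a) · u_{t(a)}⁻¹ = W(a) for every arrow a ∈ Q₁, then u_v = Iₙ for every vertex v. -/
import Mathlib


/-- `UT n X` : `X` is an `n × n` upper triangular complex matrix (an element of 𝔟). -/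
def UT (n : ℕ) (X : Matrix (Fin n) (Fin n) ℂ) : Prop :=
  ∀ i j : Fin n, (j : ℕ) < (i : ℕ) → X i j = 0

/-- `Unip n u` : `u` is a unipotent upper triangular matrix (an element of `U`). -/
def Unip (n : ℕ) (u : Matrix (Fin n) (Fin n) ℂ) : Prop :=
  UT n u ∧ ∀ i : Fin n, u i i = 1

/-- A finite quiver: finite vertex set `Q0`, finite arrow set `Q1`, head and tail maps. -/
structure FinQuiver where
  Q0 : Type
  Q1 : Type
  [fin0 : Fintype Q0]
  [fin1 : Fintype Q1]
  [dec0 : DecidableEq Q0]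
  h : Q1 → Q0
  t : Q1 → Q0

attribute [instance] FinQuiver.fin0 FinQuiver.fin1 FinQuiver.dec0

/-- Adjacency in the underlying undirected graph of the quiver. -/
def FinQuiver.Adj (Q : FinQuiver) (v w : Q.Q0) : Prop :=
  ∃ a : Q.Q1, (Q.t a = v ∧ Q.h a = w) ∨ (Q.t a = w ∧ Q.h a = v)

/-- `Q` is nontrivial and connected. -/
def FinQuiver.Connected (Q : FinQuiver) : Prop :=
  Nonempty Q.Q0 ∧ ∀ v w : Q.Q0, Relation.ReflTransGen Q.Adj v w

lemma UT.blockTriangular {n : ℕ} {X : Matrix (Fin n) (Fin n) ℂ} (h : UT n X) :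
    X.BlockTriangular id := fun i j hij => h i j hij

lemma UT.det_eq {n : ℕ} {X : Matrix (Fin n) (Fin n) ℂ} (h : UT n X) :
    X.det = ∏ i, X i i := Matrix.det_of_upperTriangular h.blockTriangular

lemma UT.isUnit_det {n : ℕ} {X : Matrix (Fin n) (Fin n) ℂ}
    (h : UT n X) (hnz : ∀ i, X i i ≠ 0) : IsUnit X.det := by
  rw [h.det_eq]
  exact isUnit_iff_ne_zero.2 (Finset.prod_ne_zero_iff.2 fun i _ => hnz i)

lemma Unip.isUnit_det {n : ℕ} {u : Matrix (Fin n) (Fin n) ℂ} (h : Unip n u) :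
    IsUnit u.det := h.1.isUnit_det fun i => by rw [h.2 i]; exact one_ne_zero

/-- a unipotent matrix commuting with an upper triangular matrix with
pairwise distinct diagonal is the identity. -/
lemma unip_commute_eq_one {n : ℕ} {u M : Matrix (Fin n) (Fin n) ℂ}
    (hu : Unip n u) (hM : UT n M)
    (hdist : ∀ i j : Fin n, i ≠ j → M i i ≠ M j j)
    (hcomm : u * M = M * u) : u = 1 := by
  have key : ∀ d : ℕ, ∀ i j : Fin n, (i : ℕ) < j → (j : ℕ) - i ≤ d → u i j = 0 := by
    intro d
    induction d with
    | zero => intro i j hij hd; omega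
    | succ d ih =>
      intro i j hij hd
      have hij' : i ≠ j := by intro h; rw [h] at hij; omega
      have hcij := congrFun (congrFun hcomm i) j
      have hL : (u * M) i j = u i i * M i j + u i j * M j j := by
        rw [Matrix.mul_apply]
        apply Fintype.sum_eq_add i j hij'
        rintro k ⟨hki, hkj⟩
        rcases lt_trichotomy (k : ℕ) (i : ℕ) with h1 | h1 | h1
        · rw [hu.1 i k h1, zero_mul]
        · exact absurd (Fin.ext h1) hki
        · rcases lt_trichotomy (k : ℕ) (j : ℕ) with h2 | h2 | h2
          · rw [ih i k h1 (by omega), zero_mul]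
          · exact absurd (Fin.ext h2) hkj
          · rw [hM k j h2, mul_zero]
      have hR : (M * u) i j = M i i * u i j + M i j * u j j := by
        rw [Matrix.mul_apply]
        apply Fintype.sum_eq_add i j hij'
        rintro k ⟨hki, hkj⟩
        rcases lt_trichotomy (k : ℕ) (i : ℕ) with h1 | h1 | h1
        · rw [hM i k h1, zero_mul]
        · exact absurd (Fin.ext h1) hki
        · rcases lt_trichotomy (k : ℕ) (j : ℕ) with h2 | h2 | h2
          · rw [ih k j h2 (by omega), mul_zero]
          · exact absurd (Fin.ext h2) hkj
          · rw [hu.1 k j h2, mul_zero]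
      rw [hL, hR, hu.2 i, hu.2 j, one_mul, mul_one] at hcij
      have : u i j * (M j j - M i i) = 0 := by linear_combination hcij
      rcases mul_eq_zero.1 this with h | h
      · exact h
      · exact absurd (sub_eq_zero.1 h) (hdist j i hij'.symm)
  ext i j
  rcases lt_trichotomy (i : ℕ) (j : ℕ) with h | h | h
  · rw [key ((j:ℕ)-i) i j h le_rfl, Matrix.one_apply_ne (fun he => by rw [he] at h; omega)]
  · rw [Fin.ext h, hu.2 j, Matrix.one_apply_eq]
  · rw [hu.1 i j h, Matrix.one_apply_ne (fun he => by rw [he] at h; omega)]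

lemma eq_one_of_mul_right_cancel {n : ℕ} {A Wm : Matrix (Fin n) (Fin n) ℂ}
    (hW : IsUnit Wm.det) (h : A * Wm = Wm) : A = 1 := by
  calc A = A * (Wm * Wm⁻¹) := by rw [Matrix.mul_nonsing_inv _ hW, mul_one]
    _ = (A * Wm) * Wm⁻¹ := by rw [mul_assoc]
    _ = Wm * Wm⁻¹ := by rw [h]
    _ = 1 := Matrix.mul_nonsing_inv _ hW

lemma eq_one_of_mul_left_cancel {n : ℕ} {A Wm : Matrix (Fin n) (Fin n) ℂ}
    (hW : IsUnit Wm.det) (h : Wm * A = Wm) : A = 1 := by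
  calc A = (Wm⁻¹ * Wm) * A := by rw [Matrix.nonsing_inv_mul _ hW, one_mul]
    _ = Wm⁻¹ * (Wm * A) := by rw [mul_assoc]
    _ = Wm⁻¹ * Wm := by rw [h]
    _ = 1 := Matrix.nonsing_inv_mul _ hW

/-- The loop case of Theorem 1.1: let `Q` be a finite connected quiver with a loop `c` at a
vertex, and let `W ∈ F•Rep(Q, (n,…,n))` be such that the diagonal entries of `W(c)` are
pairwise distinct and every `W(a)` has all diagonal entries nonzero (hence is invertible).
Then the stabilizer of `W` in `𝕌 = U^{Q₀}` is trivial. -/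
theorem loop_quiver_generic_point_trivial_stabilizer
    (n : ℕ) (hn : 1 ≤ n) (Q : FinQuiver) (hconn : Q.Connected)
    (c : Q.Q1) (hloop : Q.h c = Q.t c)
    (W : Q.Q1 → Matrix (Fin n) (Fin n) ℂ)
    (hW : ∀ a : Q.Q1, UT n (W a))
    (hdist : ∀ i j : Fin n, i ≠ j → W c i i ≠ W c j j)
    (hnz : ∀ (a : Q.Q1) (i : Fin n), W a i i ≠ 0)
    (u : Q.Q0 → Matrix (Fin n) (Fin n) ℂ)
    (hu : ∀ v : Q.Q0, Unip n (u v))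
    (hstab : ∀ a : Q.Q1, u (Q.h a) * W a * (u (Q.t a))⁻¹ = W a) :
    ∀ v : Q.Q0, u v = 1 := by
  have hUW : ∀ a : Q.Q1, IsUnit (W a).det := fun a => (hW a).isUnit_det (hnz a)
  have hstab' : ∀ a : Q.Q1, u (Q.h a) * W a = W a * u (Q.t a) := by
    intro a
    calc u (Q.h a) * W a
        = u (Q.h a) * W a * ((u (Q.t a))⁻¹ * u (Q.t a)) := by
          rw [Matrix.nonsing_inv_mul _ (hu (Q.t a)).isUnit_det, mul_one]
      _ = (u (Q.h a) * W a * (u (Q.t a))⁻¹) * u (Q.t a) := (mul_assoc _ _ _).symm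
      _ = W a * u (Q.t a) := by rw [hstab a]
  have hbase : u (Q.h c) = 1 := by
    apply unip_commute_eq_one (hu _) (hW c) hdist
    have h1 := hstab' c
    rw [← hloop] at h1
    exact h1
  intro v
  have hr := hconn.2 (Q.h c) v
  induction hr with
  | refl => exact hbase
  | tail _ hadj ih =>
    obtain ⟨a, hca | hca⟩ := hadj
    · rw [← hca.2]
      apply eq_one_of_mul_right_cancel (hUW a)
      rw [hstab' a, hca.1, ih, mul_one]
    · rw [← hca.1]
      apply eq_one_of_mul_left_cancel (hUW a)
      rw [← hstab' a, hca.2, ih, one_mul]
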